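/- Let A be a nontrivial ring (not necessarily commutative) with no zero divisors which is finitely generated as a ℤ-module, and suppose there exists a ring homomorphism f : A → ℤ. Then the canonical ring homomorphism ℤ → A (sending n to n·1) is surjective, i.e., every element of A is an integer multiple of the identity. -/
import Mathlib


/-- A nontrivial ring with no zero divisors which is finitely generated as a
`ℤ`-module and admits a ring homomorphism to `ℤ` is generated by its identity:
the canonical map `ℤ → A` is surjective. -/
theorem stmt_3 {A : Type*} [Ring A] [Nontrivial A] [NoZeroDivisors A]
    [Module.Finite ℤ A] (f : A →+* ℤ) :
    Function.Surjective (Int.castRingHom A) := by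
  have key : ∀ b : A, f b = 0 → b = 0 := by
    intro b hb
    obtain ⟨p, hmon, hev⟩ := IsIntegral.of_finite ℤ b
    suffices h : ∀ n (p : Polynomial ℤ), p.Monic → p.natDegree = n →
        Polynomial.aeval b p = 0 → b = 0 from h _ p hmon rfl hev
    intro n
    induction n using Nat.strong_induction_on with
    | _ n ih =>
      intro p hmon hdeg hev
      rcases Nat.eq_zero_or_pos n with hn0 | hnpos
      · -- then p = 1 and 1 = 0 in A, contradiction
        have hp1 : p = 1 := hmon.natDegree_eq_zero.mp (hdeg.trans hn0)
        rw [hp1, map_one] at hev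
        exact absurd hev one_ne_zero
      · -- constant coefficient of p is zero
        have h0 : p.coeff 0 = 0 := by
          have h1 : f (Polynomial.aeval b p) = 0 := by rw [hev, map_zero]
          have h2 : f (Polynomial.aeval b p)
              = Polynomial.eval₂ (f.comp (algebraMap ℤ A)) (f b) p := by
            rw [Polynomial.aeval_def, Polynomial.hom_eval₂]
          have h3 : f.comp (algebraMap ℤ A) = RingHom.id ℤ :=
            Subsingleton.elim _ _
          rw [h2, h3, hb, Polynomial.eval₂_at_zero] at h1
          simpa using h1
        obtain ⟨q, hq⟩ := Polynomial.X_dvd_iff.mpr h0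
        have hqmon : q.Monic := Polynomial.monic_X.of_mul_monic_left (hq ▸ hmon)
        have hqev : b * Polynomial.aeval b q = 0 := by
          rw [hq, map_mul, Polynomial.aeval_X] at hev
          exact hev
        rcases mul_eq_zero.mp hqev with h | h
        · exact h
        · have hdq : q.natDegree < n := by
            have : p.natDegree = 1 + q.natDegree := by
              rw [hq, Polynomial.natDegree_mul Polynomial.X_ne_zero
                hqmon.ne_zero, Polynomial.natDegree_X]
            omega
          exact ih q.natDegree hdq q hqmon rfl h
  intro a
  refine ⟨f a, ?_⟩
  have := key (a - (f a : A)) (by simp)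
  simpa using (sub_eq_zero.mp this).symm
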